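/- arXiv:1104.4605 — 2 statements merged into one kernel-verified Lean document; each statement's English description precedes it below -/
import Mathlib

section
/- Let 2 ≤ j < k ≤ n and A = R^{j,k}. Let T be a set of k-element subsets of {1,…,n} such that any two distinct members σ₁, σ₂ ∈ T satisfy |σ₁ ∩ σ₂| ≤ j−1, and let T^c be the set of all remaining k-element subsets. Then A_T^*A_T is the identity matrix and ‖A_{T^c}^* A_T (A_T^*A_T)^{−1}‖_∞ ≤ 1. -/
open scoped Classical
open Finset Matrix

noncomputable section

/-- The normalized Radon matrix `R^{j,k}`: rows are indexed by `j`-element subsets of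
`{1,…,n}`, columns by `k`-element subsets, with entry `1/√(C(k,j))` if the row set is
contained in the column set and `0` otherwise. -/
def radon (n j k : ℕ) :
    Matrix {σ : Finset (Fin n) // σ.card = j} {τ : Finset (Fin n) // τ.card = k} ℝ :=
  fun σ τ => if σ.1 ⊆ τ.1 then 1 / Real.sqrt (k.choose j) else 0

/-- The submatrix of `A` consisting of the columns indexed by `T`. -/
def colSub {m p R : Type*} (A : Matrix m p R) (T : Finset p) :
    Matrix m {x // x ∈ T} R :=
  fun i t => A i t.1

/-- Maximum absolute row sum of a matrix, `‖M‖_∞`. -/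
def matInfNorm {m p : Type*} [Fintype p] (M : Matrix m p ℝ) : ℝ :=
  ⨆ i, ∑ j, |M i j|

/-- Maximum absolute column sum of a matrix, `‖M‖₁`. -/
def matOneNorm {m p : Type*} [Fintype m] (M : Matrix m p ℝ) : ℝ :=
  ⨆ j, ∑ i, |M i j|

/-- `ℓ¹` norm of a vector. -/
def vecOneNorm {m : Type*} [Fintype m] (u : m → ℝ) : ℝ := ∑ i, |u i|

/-- `ℓ^∞` norm of a vector. -/
def vecInfNorm {m : Type*} (u : m → ℝ) : ℝ := ⨆ i, |u i|

lemma countLemma (n j : ℕ) (X : Finset (Fin n)) :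
    ∑ σ : {σ : Finset (Fin n) // σ.card = j}, (if σ.1 ⊆ X then (1:ℝ) else 0)
      = (X.card.choose j : ℝ) := by
  rw [← Finset.sum_subtype (Finset.powersetCard j (Finset.univ : Finset (Fin n)))
      (by simp [Finset.mem_powersetCard]) (fun σ => if σ ⊆ X then (1:ℝ) else 0)]
  rw [Finset.sum_boole]
  have : (Finset.powersetCard j (Finset.univ : Finset (Fin n))).filter (· ⊆ X)
      = Finset.powersetCard j X := by
    ext σ
    simp [Finset.mem_powersetCard, Finset.mem_filter, and_comm]
  rw [this, Finset.card_powersetCard]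

lemma keyLemma (n j k : ℕ) (hjk : j ≤ k)
    (τ₁ τ₂ : {τ : Finset (Fin n) // τ.card = k}) :
    ∑ σ : {σ : Finset (Fin n) // σ.card = j},
        radon n j k σ τ₁ * radon n j k σ τ₂
      = ((τ₁.1 ∩ τ₂.1).card.choose j : ℝ) / (k.choose j : ℝ) := by
  have hc : (0:ℝ) < (k.choose j : ℝ) := by
    exact_mod_cast Nat.choose_pos hjk
  have h : ∀ σ : {σ : Finset (Fin n) // σ.card = j},
      radon n j k σ τ₁ * radon n j k σ τ₂
        = (if σ.1 ⊆ τ₁.1 ∩ τ₂.1 then (1:ℝ) else 0) * (1 / (k.choose j : ℝ)) := by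
    intro σ
    simp only [radon, Finset.subset_inter_iff]
    by_cases h1 : σ.1 ⊆ τ₁.1 <;> by_cases h2 : σ.1 ⊆ τ₂.1 <;>
      simp [h1, h2, one_div, ← mul_inv, Real.mul_self_sqrt hc.le]
  rw [Finset.sum_congr rfl (fun σ _ => h σ), ← Finset.sum_mul, countLemma]
  ring

/-- if any two distinct cliques in `T` overlap in at most `j-1` nodes,
then `A_T^*A_T = I` and `‖A_{T^c}^* A_T (A_T^*A_T)⁻¹‖_∞ ≤ 1`. -/
theorem stmt6 (n j k : ℕ) (hj : 2 ≤ j) (hjk : j < k) (hk : k ≤ n)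
    (T : Finset {τ : Finset (Fin n) // τ.card = k})
    (hsep : ∀ σ₁ ∈ T, ∀ σ₂ ∈ T, σ₁ ≠ σ₂ → (σ₁.1 ∩ σ₂.1).card ≤ j - 1) :
    (colSub (radon n j k) T)ᵀ * colSub (radon n j k) T = 1 ∧
    matInfNorm ((colSub (radon n j k) Tᶜ)ᵀ * colSub (radon n j k) T *
      (((colSub (radon n j k) T)ᵀ * colSub (radon n j k) T)⁻¹)) ≤ 1 := by
  have hc : (0:ℝ) < (k.choose j : ℝ) := by
    exact_mod_cast Nat.choose_pos hjk.le
  have h1 : (colSub (radon n j k) T)ᵀ * colSub (radon n j k) T = 1 := by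
    ext t₁ t₂
    rw [Matrix.mul_apply]
    simp only [Matrix.transpose_apply, colSub]
    rw [keyLemma n j k hjk.le]
    by_cases heq : t₁ = t₂
    · subst heq
      rw [Finset.inter_self, t₁.1.2, div_self hc.ne', Matrix.one_apply_eq]
    · have hne : t₁.1 ≠ t₂.1 := fun h => heq (Subtype.ext h)
      have hcard := hsep t₁.1 t₁.2 t₂.1 t₂.2 hne
      have : (t₁.1.1 ∩ t₂.1.1).card.choose j = 0 :=
        Nat.choose_eq_zero_of_lt (lt_of_le_of_lt hcard (by omega))
      rw [this, Matrix.one_apply_ne heq]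
      simp
  refine ⟨h1, ?_⟩
  rw [h1, inv_one, Matrix.mul_one]
  apply Real.iSup_le _ zero_le_one
  intro τ
  -- row sum for row τ ∈ Tᶜ
  have hentry : ∀ t : {x // x ∈ T},
      ((colSub (radon n j k) Tᶜ)ᵀ * colSub (radon n j k) T) τ t
        = ((τ.1.1 ∩ t.1.1).card.choose j : ℝ) / (k.choose j : ℝ) := by
    intro t
    rw [Matrix.mul_apply]
    simp only [Matrix.transpose_apply, colSub]
    exact keyLemma n j k hjk.le τ.1 t.1
  have habs : ∀ t : {x // x ∈ T},
      |((colSub (radon n j k) Tᶜ)ᵀ * colSub (radon n j k) T) τ t|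
        = ((τ.1.1 ∩ t.1.1).card.choose j : ℝ) / (k.choose j : ℝ) := by
    intro t
    rw [hentry t, abs_of_nonneg (by positivity)]
  rw [Finset.sum_congr rfl (fun t _ => habs t)]
  -- reduce to a nat counting inequality
  have hnat : ∑ t ∈ T, (τ.1.1 ∩ t.1).card.choose j ≤ k.choose j := by
    have hdisj : ∀ t₁ ∈ T, ∀ t₂ ∈ T, t₁ ≠ t₂ →
        Disjoint (Finset.powersetCard j (τ.1.1 ∩ t₁.1))
                 (Finset.powersetCard j (τ.1.1 ∩ t₂.1)) := by
      intro t₁ ht₁ t₂ ht₂ hne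
      rw [Finset.disjoint_left]
      intro σ hσ1 hσ2
      rw [Finset.mem_powersetCard] at hσ1 hσ2
      have hsub : σ ⊆ t₁.1 ∩ t₂.1 :=
        Finset.subset_inter (hσ1.1.trans Finset.inter_subset_right)
          (hσ2.1.trans Finset.inter_subset_right)
      have := Finset.card_le_card hsub
      have := hsep t₁ ht₁ t₂ ht₂ hne
      omega
    calc ∑ t ∈ T, (τ.1.1 ∩ t.1).card.choose j
        = ∑ t ∈ T, (Finset.powersetCard j (τ.1.1 ∩ t.1)).card := by
          simp [Finset.card_powersetCard]
      _ = (T.biUnion (fun t => Finset.powersetCard j (τ.1.1 ∩ t.1))).card :=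
          (Finset.card_biUnion hdisj).symm
      _ ≤ (Finset.powersetCard j τ.1.1).card := by
          apply Finset.card_le_card
          intro σ hσ
          rw [Finset.mem_biUnion] at hσ
          obtain ⟨t, _, hσ⟩ := hσ
          rw [Finset.mem_powersetCard] at hσ ⊢
          exact ⟨hσ.1.trans Finset.inter_subset_left, hσ.2⟩
      _ = k.choose j := by rw [Finset.card_powersetCard, τ.1.2]
  have : ∑ t : {x // x ∈ T}, ((τ.1.1 ∩ t.1.1).card.choose j : ℝ) / (k.choose j : ℝ)
      = (∑ t ∈ T, ((τ.1.1 ∩ t.1).card.choose j : ℕ) : ℝ) / (k.choose j : ℝ) := by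
    rw [← Finset.sum_div]
    congr 1
    push_cast
    exact Finset.sum_coe_sort T (fun t => ((τ.1.1 ∩ t.1).card.choose j : ℝ))
  rw [this, div_le_one hc]
  exact_mod_cast hnat
end
end

section
/- Let 2 ≤ j < k ≤ n with 2j ≥ k+1, and let A = R^{j,k}. Let T be a set of k-element subsets of {1,…,n} (with T^c the set of all remaining k-element subsets) admitting a partition T = T₁ ∪ T₂ ∪ ⋯ ∪ T_m with |T_i| ≤ K for all i, such that any two distinct sets in the same block T_i intersect in at most r elements, and any two sets in different blocks intersect in at most 2j−k−1 elements. If (K−1)·C(r,j)/C(k,j) < 1/4 and (C(k−1,j) + (K−1)·C(⌊(k+r)/2⌋, j))/C(k,j) ≤ 3/4, then A_T^*A_T is invertible and the irrepresentable condition holds: ‖A_{T^c}^* A_T (A_T^*A_T)^{−1}‖_∞ < 1. -/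
open scoped Classical
open Finset Matrix

noncomputable section

/-!
The Gram matrix `G = A_Tᵀ A_T` and the cross Gram matrix `B = A_{Tᶜ}ᵀ A_T` both have entries
`C(|τ ∩ τ'|, j) / C(k, j)`, and `G` has ones on its diagonal. An entry vanishes as soon as
`|τ ∩ τ'| < j`, which happens between different blocks, so each row of `1 - G` has at most
`K - 1` nonzero entries, each at most `C(r, j) / C(k, j)`: `‖1 - G‖_∞ < 1/4`.
For `σ ∉ T` the inequality `|σ ∩ τ| + |σ ∩ τ'| ≤ k + |τ ∩ τ'|` shows that the columns `τ ∈ T`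
with `|σ ∩ τ| ≥ j` all lie in one block, and that at most one of them has
`|σ ∩ τ| > (k + r) / 2`; that one still has `|σ ∩ τ| ≤ k - 1`. Hence `‖B‖_∞ ≤ 3/4`.
Finally `‖B‖ + ‖1 - G‖ < 1` makes `G` invertible with `‖B G⁻¹‖ < 1`, because `X = B G⁻¹`
satisfies `X = B + X (1 - G)`.
-/

attribute [local instance] Matrix.linftyOpNormedAddCommGroup Matrix.linftyOpNormedRing
  Matrix.linftyOpNormedAlgebra

namespace Matrix

variable {l m α : Type*} [Fintype l] [Fintype m]

theorem linfty_opNorm_le_iff [NormedAddCommGroup α] {A : Matrix l m α} {r : ℝ}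
    (hr : 0 ≤ r) : ‖A‖ ≤ r ↔ ∀ i, ∑ j, ‖A i j‖ ≤ r := by
  change ‖fun i => WithLp.toLp 1 (A i)‖ ≤ r ↔ _
  simp [pi_norm_le_iff_of_nonneg hr, PiLp.norm_eq_of_L1]

theorem linfty_opNorm_lt_iff [NormedAddCommGroup α] {A : Matrix l m α} {r : ℝ}
    (hr : 0 < r) : ‖A‖ < r ↔ ∀ i, ∑ j, ‖A i j‖ < r := by
  change ‖fun i => WithLp.toLp 1 (A i)‖ < r ↔ _
  simp [pi_norm_lt_iff hr, PiLp.norm_eq_of_L1]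

theorem matInfNorm_le_linfty_opNorm (A : Matrix l m ℝ) : matInfNorm A ≤ ‖A‖ :=
  Real.iSup_le (fun i => by
    change _ ≤ ‖fun i => WithLp.toLp 1 (A i)‖
    simpa [PiLp.norm_eq_of_L1] using norm_le_pi_norm (fun i => WithLp.toLp 1 (A i)) i)
    (norm_nonneg _)

theorem sum_abs_one_sub_apply [DecidableEq m] {G : Matrix m m ℝ} (hG : ∀ i j, 0 ≤ G i j)
    (hdiag : ∀ i, G i i = 1) (i : m) : ∑ j, |(1 - G) i j| = ∑ j, G i j - 1 := by
  have hentry : ∀ j, |(1 - G) i j| = G i j - (1 : Matrix m m ℝ) i j := fun j => by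
    obtain rfl | hij := eq_or_ne i j
    · simp [hdiag]
    · simp [one_apply_ne hij, abs_of_nonneg (hG i j)]
  rw [sum_congr rfl fun j _ => hentry j, sum_sub_distrib]
  simp [one_apply]

theorem isUnit_and_norm_mul_inv_lt_one {𝕜 : Type*} [NontriviallyNormedField 𝕜] [CompleteSpace 𝕜]
    [DecidableEq m] {G : Matrix m m 𝕜} {B : Matrix l m 𝕜} (h : ‖B‖ + ‖1 - G‖ < 1) :
    IsUnit G ∧ ‖B * G⁻¹‖ < 1 := by
  -- instance search does not see completeness for the `linfty` norm on matrices
  have := @instHasSummableGeomSeriesOfCompleteSpace _ _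
    (FiniteDimensional.complete 𝕜 (Matrix m m 𝕜))
  have hG : IsUnit G := by
    simpa using isUnit_one_sub_of_norm_lt_one (x := 1 - G) (by linarith [norm_nonneg B])
  refine ⟨hG, ?_⟩
  have hinv : G⁻¹ * G = 1 := nonsing_inv_mul G ((isUnit_iff_isUnit_det G).mp hG)
  have hfix : B * G⁻¹ = B + B * G⁻¹ * (1 - G) := by
    rw [Matrix.mul_sub, Matrix.mul_one, Matrix.mul_assoc, hinv, Matrix.mul_one]; abel
  have hle : ‖B * G⁻¹‖ ≤ ‖B‖ + ‖B * G⁻¹‖ * ‖1 - G‖ :=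
    calc ‖B * G⁻¹‖ = ‖B + B * G⁻¹ * (1 - G)‖ := by rw [← hfix]
      _ ≤ ‖B‖ + ‖B * G⁻¹ * (1 - G)‖ := norm_add_le _ _
      _ ≤ ‖B‖ + ‖B * G⁻¹‖ * ‖1 - G‖ := by gcongr; exact linfty_opNorm_mul _ _
  have hε : ‖1 - G‖ < 1 := by linarith [norm_nonneg B]
  by_contra! hX
  nlinarith [mul_le_mul_of_nonneg_right hX (sub_nonneg.2 hε.le)]

end Matrix

theorem colSub_transpose_mul_colSub_apply {m p R : Type*} [Fintype m]
    [NonUnitalNonAssocSemiring R] (A : Matrix m p R) (S T : Finset p) (s : S) (t : T) :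
    ((colSub A S)ᵀ * colSub A T) s t = (Aᵀ * A) s t :=
  rfl

section Radon

variable {α : Type*} [Fintype α] [DecidableEq α] {n j k : ℕ}

theorem card_filter_subset_eq_choose (j : ℕ) (s : Finset α) :
    #{σ : {σ : Finset α // σ.card = j} | σ.1 ⊆ s} = s.card.choose j := by
  rw [← card_powersetCard j s]
  refine card_bij (fun σ _ => σ.1) (fun σ hσ => ?_) (fun _ _ _ _ h => Subtype.ext h)
    (fun t ht => ?_)
  · exact mem_powersetCard.2 ⟨(mem_filter.1 hσ).2, σ.2⟩
  · obtain ⟨hts, htj⟩ := mem_powersetCard.1 ht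
    exact ⟨⟨t, htj⟩, mem_filter.2 ⟨mem_univ _, hts⟩, rfl⟩

theorem radon_mul_radon_apply (σ : {σ : Finset (Fin n) // σ.card = j})
    (τ₁ τ₂ : {τ : Finset (Fin n) // τ.card = k}) :
    radon n j k σ τ₁ * radon n j k σ τ₂ =
      if σ.1 ⊆ τ₁.1 ∩ τ₂.1 then ((k.choose j : ℝ))⁻¹ else 0 := by
  have hsq : (√(k.choose j : ℝ))⁻¹ * (√(k.choose j : ℝ))⁻¹ = ((k.choose j : ℝ))⁻¹ := by
    rw [← mul_inv, Real.mul_self_sqrt (Nat.cast_nonneg _)]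
  unfold radon
  by_cases h₁ : σ.1 ⊆ τ₁.1 <;> by_cases h₂ : σ.1 ⊆ τ₂.1 <;> simp [h₁, h₂, subset_inter_iff, hsq]

theorem radon_transpose_mul_radon_apply (τ₁ τ₂ : {τ : Finset (Fin n) // τ.card = k}) :
    ((radon n j k)ᵀ * radon n j k) τ₁ τ₂ = ((#(τ₁.1 ∩ τ₂.1)).choose j : ℝ) / k.choose j := by
  simp only [Matrix.mul_apply, Matrix.transpose_apply, radon_mul_radon_apply, ← sum_filter,
    sum_const, card_filter_subset_eq_choose, nsmul_eq_mul, div_eq_mul_inv]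

theorem radon_transpose_mul_radon_apply_self (hjk : j ≤ k)
    (τ : {τ : Finset (Fin n) // τ.card = k}) : ((radon n j k)ᵀ * radon n j k) τ τ = 1 := by
  rw [radon_transpose_mul_radon_apply, inter_self, τ.2,
    div_self (Nat.cast_ne_zero.2 (Nat.choose_pos hjk).ne')]

theorem sum_colSub_radon_gram_apply (S T : Finset {τ : Finset (Fin n) // τ.card = k}) (s : S) :
    ∑ t : T, ((colSub (radon n j k) S)ᵀ * colSub (radon n j k) T) s t =
      (∑ t ∈ T, ((#(s.1.1 ∩ t.1)).choose j : ℝ)) / k.choose j := by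
  simp only [colSub_transpose_mul_colSub_apply, radon_transpose_mul_radon_apply, sum_div]
  exact sum_coe_sort T fun t => ((#(s.1.1 ∩ t.1)).choose j : ℝ) / k.choose j

theorem sum_abs_colSub_radon_gram_apply (S T : Finset {τ : Finset (Fin n) // τ.card = k})
    (s : S) : ∑ t : T, |((colSub (radon n j k) S)ᵀ * colSub (radon n j k) T) s t| =
      (∑ t ∈ T, ((#(s.1.1 ∩ t.1)).choose j : ℝ)) / k.choose j := by
  rw [← sum_colSub_radon_gram_apply]
  refine sum_congr rfl fun t _ => abs_of_nonneg ?_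
  rw [colSub_transpose_mul_colSub_apply, radon_transpose_mul_radon_apply]
  positivity

theorem sum_abs_one_sub_colSub_radon_gram_apply (hjk : j ≤ k)
    (T : Finset {τ : Finset (Fin n) // τ.card = k}) (τ : T) :
    ∑ t, |((1 : Matrix T T ℝ) - (colSub (radon n j k) T)ᵀ * colSub (radon n j k) T) τ t| =
      (∑ t ∈ T, ((#(τ.1.1 ∩ t.1)).choose j : ℝ)) / k.choose j - 1 := by
  rw [Matrix.sum_abs_one_sub_apply, sum_colSub_radon_gram_apply]
  · intro s t
    rw [colSub_transpose_mul_colSub_apply, radon_transpose_mul_radon_apply]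
    positivity
  · intro t
    exact radon_transpose_mul_radon_apply_self hjk t.1

end Radon

section Overlap

variable {α ι : Type*} [DecidableEq ι] {j k K r : ℕ}
  {T : Finset {τ : Finset α // τ.card = k}} {c : {τ : Finset α // τ.card = k} → ι}

theorem Finset.card_inter_add_card_inter_le [DecidableEq α] (s t u : Finset α) :
    #(s ∩ t) + #(s ∩ u) ≤ #s + #(t ∩ u) := by
  have hunion : #(s ∩ t ∪ s ∩ u) ≤ #s :=
    card_le_card (union_subset inter_subset_left inter_subset_left)
  have hinter : #(s ∩ t ∩ (s ∩ u)) ≤ #(t ∩ u) :=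
    card_le_card fun x hx => by simp only [mem_inter] at hx ⊢; exact ⟨hx.1.2, hx.2.2⟩
  have := card_inter_add_card_union (s ∩ t) (s ∩ u)
  omega

theorem card_inter_lt_of_ne [DecidableEq α] {σ τ : {τ : Finset α // τ.card = k}} (h : σ ≠ τ) :
    #(σ.1 ∩ τ.1) < k := by
  refine (card_lt_card ⟨inter_subset_left, fun hσ => h (Subtype.ext ?_)⟩).trans_eq σ.2
  exact eq_of_subset_of_card_le (hσ.trans inter_subset_right) (by rw [σ.2, τ.2])

theorem one_le_of_mem_of_card_filter_le (hK : ∀ i, #{τ ∈ T | c τ = i} ≤ K)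
    {τ : {τ : Finset α // τ.card = k}} (hτ : τ ∈ T) : 1 ≤ K :=
  have hmem : τ ∈ {t ∈ T | c t = c τ} := mem_filter.2 ⟨hτ, rfl⟩
  (card_pos.2 ⟨τ, hmem⟩).trans_le (hK (c τ))

theorem sum_choose_card_inter_le_of_mem [DecidableEq α] (hK : ∀ i, #{τ ∈ T | c τ = i} ≤ K)
    (hsame : ∀ τ₁ ∈ T, ∀ τ₂ ∈ T, τ₁ ≠ τ₂ → c τ₁ = c τ₂ → #(τ₁.1 ∩ τ₂.1) ≤ r)
    (hdiff : ∀ τ₁ ∈ T, ∀ τ₂ ∈ T, c τ₁ ≠ c τ₂ → #(τ₁.1 ∩ τ₂.1) < j)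
    {τ : {τ : Finset α // τ.card = k}} (hτ : τ ∈ T) :
    ∑ t ∈ T, (#(τ.1 ∩ t.1)).choose j ≤ k.choose j + (K - 1) * r.choose j := by
  rw [← add_sum_erase T _ hτ, inter_self, τ.2]
  gcongr
  have hblock : #{t ∈ T.erase τ | c t = c τ} ≤ K - 1 := by
    have hmem : τ ∈ {t ∈ T | c t = c τ} := mem_filter.2 ⟨hτ, rfl⟩
    rw [filter_erase, card_erase_of_mem hmem]
    exact Nat.sub_le_sub_right (hK _) 1
  calc ∑ t ∈ T.erase τ, (#(τ.1 ∩ t.1)).choose j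
      ≤ ∑ t ∈ T.erase τ with c t = c τ, r.choose j := by
        rw [sum_filter]
        refine sum_le_sum fun t ht => ?_
        obtain ⟨htτ, htT⟩ := mem_erase.1 ht
        split_ifs with hc
        · exact Nat.choose_le_choose j (hsame τ hτ t htT htτ.symm hc.symm)
        · exact (Nat.choose_eq_zero_of_lt (hdiff τ hτ t htT fun h => hc h.symm)).le
    _ ≤ (K - 1) * r.choose j := by
        rw [sum_const, smul_eq_mul]
        exact Nat.mul_le_mul_right _ hblock

theorem sum_choose_card_inter_le_of_notMem [DecidableEq α] (hK : ∀ i, #{τ ∈ T | c τ = i} ≤ K)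
    (hsame : ∀ τ₁ ∈ T, ∀ τ₂ ∈ T, τ₁ ≠ τ₂ → c τ₁ = c τ₂ → #(τ₁.1 ∩ τ₂.1) ≤ r)
    (hdiff : ∀ τ₁ ∈ T, ∀ τ₂ ∈ T, c τ₁ ≠ c τ₂ → #(τ₁.1 ∩ τ₂.1) + k < 2 * j)
    {σ : {τ : Finset α // τ.card = k}} (hσ : σ ∉ T) :
    ∑ t ∈ T, (#(σ.1 ∩ t.1)).choose j ≤ (k - 1).choose j + (K - 1) * ((k + r) / 2).choose j := by
  have hσk : #σ.1 = k := σ.2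
  set S := {t ∈ T | j ≤ #(σ.1 ∩ t.1)} with hS
  rw [← sum_filter_of_ne fun t _ h => not_lt.1 (mt Nat.choose_eq_zero_of_lt h)]
  obtain hSe | hSne := S.eq_empty_or_nonempty
  · simp [← hS, hSe]
  obtain ⟨t₀, ht₀, hmax⟩ := exists_max_image S (fun t => #(σ.1 ∩ t.1)) hSne
  have hmemS : ∀ {t}, t ∈ S → t ∈ T ∧ j ≤ #(σ.1 ∩ t.1) := fun ht => mem_filter.1 ht
  have hblock : ∀ t ∈ S, c t = c t₀ := fun t ht => by
    by_contra hc
    have := hdiff t (hmemS ht).1 t₀ (hmemS ht₀).1 hc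
    have := Finset.card_inter_add_card_inter_le σ.1 t.1 t₀.1
    have := (hmemS ht).2
    have := (hmemS ht₀).2
    omega
  have hcardS : #S ≤ K :=
    (card_le_card fun t ht => mem_filter.2 ⟨(hmemS ht).1, hblock t ht⟩).trans (hK (c t₀))
  have hsmall : ∀ t ∈ S.erase t₀, #(σ.1 ∩ t.1) ≤ (k + r) / 2 := fun t ht => by
    obtain ⟨htt₀, htS⟩ := mem_erase.1 ht
    have := hsame t (hmemS htS).1 t₀ (hmemS ht₀).1 htt₀ (hblock t htS)
    have := Finset.card_inter_add_card_inter_le σ.1 t.1 t₀.1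
    have := hmax t htS
    omega
  have hbig : #(σ.1 ∩ t₀.1) ≤ k - 1 :=
    Nat.le_sub_one_of_lt (card_inter_lt_of_ne fun h => hσ (h ▸ (hmemS ht₀).1))
  calc ∑ t ∈ S, (#(σ.1 ∩ t.1)).choose j
      = (#(σ.1 ∩ t₀.1)).choose j + ∑ t ∈ S.erase t₀, (#(σ.1 ∩ t.1)).choose j :=
        (add_sum_erase S _ ht₀).symm
    _ ≤ (k - 1).choose j + ∑ t ∈ S.erase t₀, ((k + r) / 2).choose j :=
        add_le_add (Nat.choose_le_choose j hbig)
          (sum_le_sum fun t ht => Nat.choose_le_choose j (hsmall t ht))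
    _ ≤ (k - 1).choose j + (K - 1) * ((k + r) / 2).choose j := by
        rw [sum_const, card_erase_of_mem ht₀, smul_eq_mul]
        exact Nat.add_le_add_left (Nat.mul_le_mul_right _ (Nat.sub_le_sub_right hcardS 1)) _

end Overlap

section RadonGram

variable {ι : Type*} [DecidableEq ι] {n j k K r : ℕ}
  {T : Finset {τ : Finset (Fin n) // τ.card = k}} {c : {τ : Finset (Fin n) // τ.card = k} → ι}

theorem norm_one_sub_colSub_radon_gram_lt (hjk : j ≤ k) (hK : ∀ i, #{τ ∈ T | c τ = i} ≤ K)
    (hsame : ∀ τ₁ ∈ T, ∀ τ₂ ∈ T, τ₁ ≠ τ₂ → c τ₁ = c τ₂ → #(τ₁.1 ∩ τ₂.1) ≤ r)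
    (hdiff : ∀ τ₁ ∈ T, ∀ τ₂ ∈ T, c τ₁ ≠ c τ₂ → #(τ₁.1 ∩ τ₂.1) < j) {ε : ℝ} (hε : 0 < ε)
    (hc : ((K : ℝ) - 1) * r.choose j / k.choose j < ε) :
    ‖1 - (colSub (radon n j k) T)ᵀ * colSub (radon n j k) T‖ < ε := by
  have hCk : (0 : ℝ) < k.choose j := by exact_mod_cast Nat.choose_pos hjk
  refine (linfty_opNorm_lt_iff hε).2 fun τ => ?_
  have hK₁ := one_le_of_mem_of_card_filter_le hK τ.2
  have hsum : (∑ t ∈ T, ((#(τ.1.1 ∩ t.1)).choose j : ℝ)) ≤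
      k.choose j + ((K - 1 : ℕ) : ℝ) * r.choose j := by
    exact_mod_cast sum_choose_card_inter_le_of_mem hK hsame hdiff τ.2
  push_cast [Nat.cast_sub hK₁] at hsum
  rw [div_lt_iff₀ hCk] at hc
  simp only [Real.norm_eq_abs, sum_abs_one_sub_colSub_radon_gram_apply hjk, sub_lt_iff_lt_add,
    div_lt_iff₀ hCk]
  linarith

theorem norm_colSub_compl_radon_gram_le (hjk : j ≤ k) (hK : ∀ i, #{τ ∈ T | c τ = i} ≤ K)
    (hsame : ∀ τ₁ ∈ T, ∀ τ₂ ∈ T, τ₁ ≠ τ₂ → c τ₁ = c τ₂ → #(τ₁.1 ∩ τ₂.1) ≤ r)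
    (hdiff : ∀ τ₁ ∈ T, ∀ τ₂ ∈ T, c τ₁ ≠ c τ₂ → #(τ₁.1 ∩ τ₂.1) + k < 2 * j) {β : ℝ} (hβ : 0 ≤ β)
    (hc : (((k - 1).choose j : ℝ) + ((K : ℝ) - 1) * ((k + r) / 2).choose j) / k.choose j ≤ β) :
    ‖(colSub (radon n j k) Tᶜ)ᵀ * colSub (radon n j k) T‖ ≤ β := by
  have hCk : (0 : ℝ) < k.choose j := by exact_mod_cast Nat.choose_pos hjk
  refine (linfty_opNorm_le_iff hβ).2 fun σ => ?_
  simp only [Real.norm_eq_abs, sum_abs_colSub_radon_gram_apply, div_le_iff₀ hCk]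
  obtain rfl | ⟨τ, hτ⟩ := T.eq_empty_or_nonempty
  · simp only [sum_empty]; positivity
  have hK₁ := one_le_of_mem_of_card_filter_le hK hτ
  have hsum : (∑ t ∈ T, ((#(σ.1.1 ∩ t.1)).choose j : ℝ)) ≤
      (k - 1).choose j + ((K - 1 : ℕ) : ℝ) * ((k + r) / 2).choose j := by
    exact_mod_cast sum_choose_card_inter_le_of_notMem hK hsame hdiff (mem_compl.1 σ.2)
  push_cast [Nat.cast_sub hK₁] at hsum
  rw [div_le_iff₀ hCk] at hc
  linarith

end RadonGram

theorem stmt10_general (n j k m K r : ℕ) (hjk : j < k)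
    (h2j : k + 1 ≤ 2 * j)
    (T : Finset {τ : Finset (Fin n) // τ.card = k})
    (c : {τ : Finset (Fin n) // τ.card = k} → Fin m)
    (hK : ∀ i : Fin m, (T.filter (fun τ => c τ = i)).card ≤ K)
    (hsame : ∀ τ₁ ∈ T, ∀ τ₂ ∈ T, τ₁ ≠ τ₂ → c τ₁ = c τ₂ → (τ₁.1 ∩ τ₂.1).card ≤ r)
    (hdiff : ∀ τ₁ ∈ T, ∀ τ₂ ∈ T, c τ₁ ≠ c τ₂ → (τ₁.1 ∩ τ₂.1).card ≤ 2 * j - k - 1)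
    (hc1 : ((K : ℝ) - 1) * (r.choose j : ℝ) / (k.choose j : ℝ) < 1 / 4)
    (hc2 : (((k - 1).choose j : ℝ) + ((K : ℝ) - 1) * ((((k + r) / 2).choose j : ℝ))) /
        (k.choose j : ℝ) ≤ 3 / 4) :
    IsUnit ((colSub (radon n j k) T)ᵀ * colSub (radon n j k) T) ∧
    matInfNorm ((colSub (radon n j k) Tᶜ)ᵀ * colSub (radon n j k) T *
      (((colSub (radon n j k) T)ᵀ * colSub (radon n j k) T)⁻¹)) < 1 := by
  have hdiff' : ∀ τ₁ ∈ T, ∀ τ₂ ∈ T, c τ₁ ≠ c τ₂ → #(τ₁.1 ∩ τ₂.1) + k < 2 * j :=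
    fun τ₁ h₁ τ₂ h₂ h => by have := hdiff τ₁ h₁ τ₂ h₂ h; omega
  have hG := norm_one_sub_colSub_radon_gram_lt hjk.le hK hsame
    (fun τ₁ h₁ τ₂ h₂ h => by have := hdiff' τ₁ h₁ τ₂ h₂ h; omega) (by norm_num) hc1
  have hB := norm_colSub_compl_radon_gram_le hjk.le hK hsame hdiff' (by norm_num) hc2
  obtain ⟨hunit, hlt⟩ :=
    Matrix.isUnit_and_norm_mul_inv_lt_one ((add_lt_add_of_le_of_lt hB hG).trans_eq (by norm_num))
  exact ⟨hunit, (Matrix.matInfNorm_le_linfty_opNorm _).trans_lt hlt⟩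

/-- partitioned overlap condition for the irrepresentable condition.
`T` is partitioned (via the block-assignment map `c`) into blocks of size at most `K`;
same-block overlaps are at most `r`, different-block overlaps at most `2j-k-1`.
Under the two numeric conditions, `A_T^*A_T` is invertible and IRR holds. -/
theorem stmt10 (n j k m K r : ℕ) (hj : 2 ≤ j) (hjk : j < k) (hk : k ≤ n)
    (h2j : k + 1 ≤ 2 * j)
    (T : Finset {τ : Finset (Fin n) // τ.card = k})
    (c : {τ : Finset (Fin n) // τ.card = k} → Fin m)
    (hK : ∀ i : Fin m, (T.filter (fun τ => c τ = i)).card ≤ K)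
    (hsame : ∀ τ₁ ∈ T, ∀ τ₂ ∈ T, τ₁ ≠ τ₂ → c τ₁ = c τ₂ → (τ₁.1 ∩ τ₂.1).card ≤ r)
    (hdiff : ∀ τ₁ ∈ T, ∀ τ₂ ∈ T, c τ₁ ≠ c τ₂ → (τ₁.1 ∩ τ₂.1).card ≤ 2 * j - k - 1)
    (hc1 : ((K : ℝ) - 1) * (r.choose j : ℝ) / (k.choose j : ℝ) < 1 / 4)
    (hc2 : (((k - 1).choose j : ℝ) + ((K : ℝ) - 1) * ((((k + r) / 2).choose j : ℝ))) /
        (k.choose j : ℝ) ≤ 3 / 4) :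
    IsUnit ((colSub (radon n j k) T)ᵀ * colSub (radon n j k) T) ∧
    matInfNorm ((colSub (radon n j k) Tᶜ)ᵀ * colSub (radon n j k) T *
      (((colSub (radon n j k) T)ᵀ * colSub (radon n j k) T)⁻¹)) < 1 :=
  stmt10_general n j k m K r hjk h2j T c hK hsame hdiff hc1 hc2
end
end
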